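/- arXiv:2206.08963 — 3 statements merged into one kernel-verified Lean document; each statement's English description precedes it below -/
import Mathlib

section
/- Suppose there exist functions P : ℝ^n × ℝ^m × {0,...,T−1} → ℝ, R : ℝ^n → ℝ, and for each agent i functions Θ^i (depending only on the states and actions of the agents other than i and on k) and Φ^i (depending only on the terminal states of the agents other than i) such that for every agent i, every k = 0,...,T−1 and all (x, u) ∈ ℝ^n × ℝ^m: L^i(x, u, k) = P(x, u, k) + Θ^i(x^{-i}, u^{-i}, k), and S^i(x^i_T, T) = R(x_T, T) + Φ^i(x^{-i}_T, T) for all x_T ∈ ℝ^n. Then the game is a constrained dynamic potential game with potential (P, R); that is, for every agent i, every pair of strategies γ^i, ν^i of agent i, and every strategy profile γ^{-i} of the other agents: J^i(x_0, (γ^i, γ^{-i})) − J^i(x_0, (ν^i, γ^{-i})) = J(x_0, (γ^i, γ^{-i})) − J(x_0, (ν^i, γ^{-i})), where J(x_0, γ) = R(x_T, T) + Σ_{k=0}^{T−1} P(x_k, u_k, k). -/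
/-!
Each agent's state evolves under its own actions only, so a unilateral deviation of agent `i`
leaves the state and action trajectories of all other agents unchanged. The parts `Θ^i` and `Φ^i`
of agent `i`'s cost see only those trajectories, so they cancel in the difference of `J^i`,
and what remains is the difference of the potential cost.
-/

/-- The joint state trajectory generated from initial state `x0` under
per-agent dynamics `f` and open-loop strategy profile `γ`. -/
noncomputable def traj {N : ℕ} {n m : Fin N → ℕ}
    (f : ∀ i : Fin N, (Fin (n i) → ℝ) → (Fin (m i) → ℝ) → ℕ → (Fin (n i) → ℝ))
    (x0 : ∀ i, Fin (n i) → ℝ) (γ : ∀ i, ℕ → Fin (m i) → ℝ) :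
    ℕ → ∀ i, Fin (n i) → ℝ
  | 0 => x0
  | (k + 1) => fun i => f i (traj f x0 γ k i) (γ i k) k

/-- Cost of agent `i`: terminal cost on its own terminal state plus sum of
running costs over the horizon. -/
noncomputable def agentCost {N : ℕ} {n m : Fin N → ℕ} (T : ℕ)
    (f : ∀ i : Fin N, (Fin (n i) → ℝ) → (Fin (m i) → ℝ) → ℕ → (Fin (n i) → ℝ))
    (x0 : ∀ i, Fin (n i) → ℝ)
    (L : ∀ _ : Fin N, (∀ j, Fin (n j) → ℝ) → (∀ j, Fin (m j) → ℝ) → ℕ → ℝ)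
    (S : ∀ i : Fin N, (Fin (n i) → ℝ) → ℝ)
    (i : Fin N) (γ : ∀ j, ℕ → Fin (m j) → ℝ) : ℝ :=
  S i (traj f x0 γ T i) +
    ∑ k ∈ Finset.range T, L i (traj f x0 γ k) (fun j => γ j k) k

/-- Candidate potential cost: terminal potential `R` on the joint terminal
state plus the sum of the running potential `P` over the horizon. -/
noncomputable def potCost {N : ℕ} {n m : Fin N → ℕ} (T : ℕ)
    (f : ∀ i : Fin N, (Fin (n i) → ℝ) → (Fin (m i) → ℝ) → ℕ → (Fin (n i) → ℝ))
    (x0 : ∀ i, Fin (n i) → ℝ)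
    (P : (∀ j, Fin (n j) → ℝ) → (∀ j, Fin (m j) → ℝ) → ℕ → ℝ)
    (R : (∀ j, Fin (n j) → ℝ) → ℝ)
    (γ : ∀ j, ℕ → Fin (m j) → ℝ) : ℝ :=
  R (traj f x0 γ T) +
    ∑ k ∈ Finset.range T, P (traj f x0 γ k) (fun j => γ j k) k

open Finset

section DecoupledGame

variable {N : ℕ} {n m : Fin N → ℕ}
  (f : ∀ i : Fin N, (Fin (n i) → ℝ) → (Fin (m i) → ℝ) → ℕ → (Fin (n i) → ℝ))
  (x0 : ∀ i, Fin (n i) → ℝ)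

theorem traj_apply_congr {γ γ' : ∀ j, ℕ → Fin (m j) → ℝ} {j : Fin N} (h : γ' j = γ j) (k : ℕ) :
    traj f x0 γ' k j = traj f x0 γ k j := by
  induction k with
  | zero => rfl
  | succ k ih => simp only [traj, ih, h]

variable (T : ℕ)
  (Θ : ∀ i : Fin N,
    (∀ j : {j : Fin N // j ≠ i}, Fin (n j.1) → ℝ) →
    (∀ j : {j : Fin N // j ≠ i}, Fin (m j.1) → ℝ) → ℕ → ℝ)
  (Φ : ∀ i : Fin N, (∀ j : {j : Fin N // j ≠ i}, Fin (n j.1) → ℝ) → ℝ)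

noncomputable def residualCost (i : Fin N) (γ : ∀ j, ℕ → Fin (m j) → ℝ) : ℝ :=
  Φ i (fun j => traj f x0 γ T j.1) +
    ∑ k ∈ range T, Θ i (fun j => traj f x0 γ k j.1) (fun j => γ j.1 k) k

theorem residualCost_congr {i : Fin N} {γ γ' : ∀ j, ℕ → Fin (m j) → ℝ}
    (h : ∀ j, j ≠ i → γ' j = γ j) :
    residualCost f x0 T Θ Φ i γ' = residualCost f x0 T Θ Φ i γ := by
  have hx : ∀ k, (fun j : {j // j ≠ i} => traj f x0 γ' k j.1) =
      fun j : {j // j ≠ i} => traj f x0 γ k j.1 :=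
    fun k => funext fun j => traj_apply_congr f x0 (h j.1 j.2) k
  have hu : ∀ k, (fun j : {j // j ≠ i} => γ' j.1 k) = fun j : {j // j ≠ i} => γ j.1 k :=
    fun k => funext fun j => congrFun (h j.1 j.2) k
  simp only [residualCost, hx, hu]

theorem agentCost_eq_potCost_add_residualCost
    (L : ∀ _ : Fin N, (∀ j, Fin (n j) → ℝ) → (∀ j, Fin (m j) → ℝ) → ℕ → ℝ)
    (S : ∀ i : Fin N, (Fin (n i) → ℝ) → ℝ)
    (P : (∀ j, Fin (n j) → ℝ) → (∀ j, Fin (m j) → ℝ) → ℕ → ℝ)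
    (R : (∀ j, Fin (n j) → ℝ) → ℝ)
    (hL : ∀ (i : Fin N) (x : ∀ j, Fin (n j) → ℝ) (u : ∀ j, Fin (m j) → ℝ) (k : ℕ),
      k < T → L i x u k = P x u k + Θ i (fun j => x j.1) (fun j => u j.1) k)
    (hS : ∀ (i : Fin N) (x : ∀ j, Fin (n j) → ℝ),
      S i (x i) = R x + Φ i (fun j => x j.1))
    (i : Fin N) (γ : ∀ j, ℕ → Fin (m j) → ℝ) :
    agentCost T f x0 L S i γ = potCost T f x0 P R γ + residualCost f x0 T Θ Φ i γ := by
  rw [agentCost, potCost, residualCost, hS,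
    sum_congr rfl fun k hk => hL i _ _ k (mem_range.mp hk), sum_add_distrib]
  ring

end DecoupledGame

/-- If each running cost decomposes as
`L^i(x,u,k) = P(x,u,k) + Θ^i(x^{-i},u^{-i},k)` and each terminal cost as
`S^i(x^i) = R(x) + Φ^i(x^{-i})`, then the game is a constrained dynamic
potential game with potential `(P, R)`: for every agent `i`, every strategy
profile `γ` (providing `γ^i` and `γ^{-i}`) and every alternative strategy
`ν` of agent `i`, the change of `J^i` under the unilateral deviation equals
the change of the potential cost `J`. -/
theorem decomposition_implies_potential_game
    {N T : ℕ} (n m : Fin N → ℕ)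
    (f : ∀ i : Fin N, (Fin (n i) → ℝ) → (Fin (m i) → ℝ) → ℕ → (Fin (n i) → ℝ))
    (x0 : ∀ i, Fin (n i) → ℝ)
    (L : ∀ _ : Fin N, (∀ j, Fin (n j) → ℝ) → (∀ j, Fin (m j) → ℝ) → ℕ → ℝ)
    (S : ∀ i : Fin N, (Fin (n i) → ℝ) → ℝ)
    (P : (∀ j, Fin (n j) → ℝ) → (∀ j, Fin (m j) → ℝ) → ℕ → ℝ)
    (R : (∀ j, Fin (n j) → ℝ) → ℝ)
    (Θ : ∀ i : Fin N,
      (∀ j : {j : Fin N // j ≠ i}, Fin (n j.1) → ℝ) →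
      (∀ j : {j : Fin N // j ≠ i}, Fin (m j.1) → ℝ) → ℕ → ℝ)
    (Φ : ∀ i : Fin N, (∀ j : {j : Fin N // j ≠ i}, Fin (n j.1) → ℝ) → ℝ)
    (hL : ∀ (i : Fin N) (x : ∀ j, Fin (n j) → ℝ) (u : ∀ j, Fin (m j) → ℝ) (k : ℕ),
      k < T → L i x u k = P x u k + Θ i (fun j => x j.1) (fun j => u j.1) k)
    (hS : ∀ (i : Fin N) (x : ∀ j, Fin (n j) → ℝ),
      S i (x i) = R x + Φ i (fun j => x j.1)) :
    ∀ (i : Fin N) (γ : ∀ j, ℕ → Fin (m j) → ℝ) (ν : ℕ → Fin (m i) → ℝ),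
      agentCost T f x0 L S i γ - agentCost T f x0 L S i (Function.update γ i ν)
        = potCost T f x0 P R γ - potCost T f x0 P R (Function.update γ i ν) := by
  intro i γ ν
  have hdev : ∀ j, j ≠ i → Function.update γ i ν j = γ j :=
    fun j hj => Function.update_of_ne hj ν γ
  rw [agentCost_eq_potCost_add_residualCost f x0 T Θ Φ L S P R hL hS,
    agentCost_eq_potCost_add_residualCost f x0 T Θ Φ L S P R hL hS,
    residualCost_congr f x0 T Θ Φ hdev, add_sub_add_right_eq_sub]
end

section
/- Under continuous differentiability of all cost functions on ℝ^n × ℝ^m (respectively ℝ^n for the terminal costs), the conditions of Lemma 1 and Lemma 2 are equivalent: for given P and R, there exist functions Θ^i (depending only on (x^{-i}, u^{-i}, k)) and Φ^i (depending only on x^{-i}_T) with L^i(x, u, k) = P(x, u, k) + Θ^i(x^{-i}, u^{-i}, k) and S^i(x_T) = R(x_T) + Φ^i(x^{-i}_T) for all arguments, if and only if for every agent i, every k, and all (x, u): ∂L^i(x, u, k)/∂x^i = ∂P(x, u, k)/∂x^i, ∂L^i(x, u, k)/∂u^i = ∂P(x, u, k)/∂u^i, and ∂S^i(x_T)/∂x^i_T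 = ∂R(x_T)/∂x^i_T for all x_T. -/
/-!
A difference `F - G` whose partial derivative in agent `i`'s block vanishes identically is
constant along that block (mean value theorem on the slice), so it equals its value at the point
whose `i`-th block is replaced by `0`, which is a function of the other blocks only. Evaluating
`L^i - P` and `S^i - R` there gives `Θ^i` and `Φ^i` explicitly. Conversely, a summand depending
only on the other blocks is constant on every slice and drops out of the partial derivative.
-/

open Function Equiv

theorem Equiv.piSplitAt_symm_eq_update {ι : Type*} [DecidableEq ι] {E : ι → Type*} (i : ι)
    (x : ∀ j, E j) (a : E i) :
    (piSplitAt i E).symm (a, fun j => x j) = update x i a := by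
  funext j
  by_cases h : j = i
  · subst h; simp
  · simp [h]

section PartialFDeriv

variable {𝕜 ι V : Type*} [NontriviallyNormedField 𝕜] [DecidableEq ι]
  {E : ι → Type*} [∀ j, NormedAddCommGroup (E j)] [∀ j, NormedSpace 𝕜 (E j)]
  [NormedAddCommGroup V] [NormedSpace 𝕜 V] (i : ι)

theorem fderiv_update_eq_of_eq_add_comp_restrict {F G : (∀ j, E j) → V}
    (Ψ : (∀ j : {j // j ≠ i}, E j) → V) (h : ∀ y, F y = G y + Ψ (fun j => y j))
    (x : ∀ j, E j) :
    fderiv 𝕜 (fun a => F (update x i a)) (x i) = fderiv 𝕜 (fun a => G (update x i a)) (x i) := by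
  simp_rw [h, update_comp_eq_of_forall_ne' x _ (fun j : {j // j ≠ i} => j.2)]
  exact fderiv_add_const _

variable [IsRCLikeNormedField 𝕜] [Fintype ι]

theorem sub_update_eq_sub_of_fderiv_update_eq {F G : (∀ j, E j) → V}
    (hF : Differentiable 𝕜 F) (hG : Differentiable 𝕜 G)
    (h : ∀ x, fderiv 𝕜 (fun a => F (update x i a)) (x i)
      = fderiv 𝕜 (fun a => G (update x i a)) (x i))
    (x : ∀ j, E j) (a : E i) :
    F (update x i a) - G (update x i a) = F x - G x := by
  have hslice : ∀ H : (∀ j, E j) → V, Differentiable 𝕜 H →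
      Differentiable 𝕜 (fun b => H (update x i b)) :=
    fun H hH => hH.comp fun b => (hasFDerivAt_update x b).differentiableAt
  have hzero : ∀ b, fderiv 𝕜 (fun b => F (update x i b) - G (update x i b)) b = 0 := by
    intro b
    have hb := h (update x i b)
    simp only [update_idem, update_self] at hb
    rw [fderiv_fun_sub (hslice F hF b) (hslice G hG b), hb, sub_self]
  simpa using is_const_of_fderiv_eq_zero ((hslice F hF).sub (hslice G hG)) hzero a (x i)

theorem sub_update_prod_eq_sub_of_fderiv_update_eq {ι' : Type*} [Fintype ι'] [DecidableEq ι']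
    {E' : ι' → Type*} [∀ j, NormedAddCommGroup (E' j)] [∀ j, NormedSpace 𝕜 (E' j)] (i' : ι')
    {F G : (∀ j, E j) × (∀ j, E' j) → V} (hF : Differentiable 𝕜 F) (hG : Differentiable 𝕜 G)
    (hx : ∀ x u, fderiv 𝕜 (fun a => F (update x i a, u)) (x i)
      = fderiv 𝕜 (fun a => G (update x i a, u)) (x i))
    (hu : ∀ x u, fderiv 𝕜 (fun b => F (x, update u i' b)) (u i')
      = fderiv 𝕜 (fun b => G (x, update u i' b)) (u i'))
    (x : ∀ j, E j) (u : ∀ j, E' j) (a : E i) (b : E' i') :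
    F (update x i a, update u i' b) - G (update x i a, update u i' b) = F (x, u) - G (x, u) := by
  have hstate := sub_update_eq_sub_of_fderiv_update_eq i
    (F := fun y => F (y, update u i' b)) (G := fun y => G (y, update u i' b))
    (hF.comp (differentiable_id.prodMk (differentiable_const (update u i' b))))
    (hG.comp (differentiable_id.prodMk (differentiable_const (update u i' b))))
    (fun y => hx y _) x a
  have haction := sub_update_eq_sub_of_fderiv_update_eq i'
    (F := fun v => F (x, v)) (G := fun v => G (x, v))
    (hF.comp ((differentiable_const x).prodMk differentiable_id))
    (hG.comp ((differentiable_const x).prodMk differentiable_id)) (hu x) u b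
  exact hstate.trans haction

end PartialFDeriv

theorem decomposition_iff_gradient_conditions
    {N T : ℕ} (n m : Fin N → ℕ)
    (L : ∀ _ : Fin N, (∀ j, Fin (n j) → ℝ) → (∀ j, Fin (m j) → ℝ) → ℕ → ℝ)
    (S : ∀ _ : Fin N, (∀ j, Fin (n j) → ℝ) → ℝ)
    (P : (∀ j, Fin (n j) → ℝ) → (∀ j, Fin (m j) → ℝ) → ℕ → ℝ)
    (R : (∀ j, Fin (n j) → ℝ) → ℝ)
    (hLsmooth : ∀ (i : Fin N) (k : ℕ), k < T →
      ContDiff ℝ 1 (fun p : (∀ j, Fin (n j) → ℝ) × (∀ j, Fin (m j) → ℝ) => L i p.1 p.2 k))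
    (hPsmooth : ∀ k : ℕ, k < T →
      ContDiff ℝ 1 (fun p : (∀ j, Fin (n j) → ℝ) × (∀ j, Fin (m j) → ℝ) => P p.1 p.2 k))
    (hSsmooth : ∀ i : Fin N, ContDiff ℝ 1 (S i))
    (hRsmooth : ContDiff ℝ 1 R) :
    ((∃ (Θ : ∀ i : Fin N,
          (∀ j : {j : Fin N // j ≠ i}, Fin (n j.1) → ℝ) →
          (∀ j : {j : Fin N // j ≠ i}, Fin (m j.1) → ℝ) → ℕ → ℝ)
        (Φ : ∀ i : Fin N, (∀ j : {j : Fin N // j ≠ i}, Fin (n j.1) → ℝ) → ℝ),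
        (∀ (i : Fin N) (x : ∀ j, Fin (n j) → ℝ) (u : ∀ j, Fin (m j) → ℝ) (k : ℕ),
          k < T → L i x u k = P x u k + Θ i (fun j => x j.1) (fun j => u j.1) k) ∧
        (∀ (i : Fin N) (x : ∀ j, Fin (n j) → ℝ),
          S i x = R x + Φ i (fun j => x j.1)))
      ↔
      ((∀ (i : Fin N) (x : ∀ j, Fin (n j) → ℝ) (u : ∀ j, Fin (m j) → ℝ) (k : ℕ),
          k < T →
          fderiv ℝ (fun xi : Fin (n i) → ℝ => L i (Function.update x i xi) u k) (x i)
            = fderiv ℝ (fun xi : Fin (n i) → ℝ => P (Function.update x i xi) u k) (x i)) ∧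
        (∀ (i : Fin N) (x : ∀ j, Fin (n j) → ℝ) (u : ∀ j, Fin (m j) → ℝ) (k : ℕ),
          k < T →
          fderiv ℝ (fun ui : Fin (m i) → ℝ => L i x (Function.update u i ui) k) (u i)
            = fderiv ℝ (fun ui : Fin (m i) → ℝ => P x (Function.update u i ui) k) (u i)) ∧
        (∀ (i : Fin N) (x : ∀ j, Fin (n j) → ℝ),
          fderiv ℝ (fun xi : Fin (n i) → ℝ => S i (Function.update x i xi)) (x i)
            = fderiv ℝ (fun xi : Fin (n i) → ℝ => R (Function.update x i xi)) (x i)))) := by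
  constructor
  · rintro ⟨Θ, Φ, hL, hS⟩
    refine ⟨fun i x u k hk => ?_, fun i x u k hk => ?_, fun i x => ?_⟩
    · exact fderiv_update_eq_of_eq_add_comp_restrict i (F := fun y => L i y u k)
        (fun xo => Θ i xo (fun j => u j.1) k) (fun y => hL i y u k hk) x
    · exact fderiv_update_eq_of_eq_add_comp_restrict i (F := fun v => L i x v k)
        (fun uo => Θ i (fun j => x j.1) uo k) (fun v => hL i x v k hk) u
    · exact fderiv_update_eq_of_eq_add_comp_restrict i (Φ i) (hS i) x
  · rintro ⟨hx, hu, hS⟩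
    refine ⟨fun i xo uo k =>
        L i ((piSplitAt i _).symm (0, xo)) ((piSplitAt i _).symm (0, uo)) k
          - P ((piSplitAt i _).symm (0, xo)) ((piSplitAt i _).symm (0, uo)) k,
      fun i xo => S i ((piSplitAt i _).symm (0, xo)) - R ((piSplitAt i _).symm (0, xo)),
      fun i x u k hk => ?_, fun i x => ?_⟩
    · have h := sub_update_prod_eq_sub_of_fderiv_update_eq i i
        ((hLsmooth i k hk).differentiable one_ne_zero)
        ((hPsmooth k hk).differentiable one_ne_zero)
        (fun x u => hx i x u k hk) (fun x u => hu i x u k hk) x u 0 0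
      simp only [piSplitAt_symm_eq_update]
      rw [h]
      abel
    · have h := sub_update_eq_sub_of_fderiv_update_eq i
        ((hSsmooth i).differentiable one_ne_zero) (hRsmooth.differentiable one_ne_zero) (hS i) x 0
      simp only [piSplitAt_symm_eq_update]
      rw [h]
      abel
end

section
/- Assume all cost, dynamics, and constraint functions are continuously differentiable, and suppose the gradient-equality conditions hold: for every agent i, every k = 0,...,T−1, and all (x, u) ∈ ℝ^n × ℝ^m, ∂L^i(x, u, k)/∂x^i = ∂P(x, u, k)/∂x^i, ∂L^i(x, u, k)/∂u^i = ∂P(x, u, k)/∂u^i, and ∂S^i(x_T)/∂x^i_T = ∂R(x_T)/∂x^i_T for all x_T. Let (x_k, u_k)_{k}, together with multipliers ξ_k ∈ ℝ^n (k = 0,...,T−1) and δ_k ∈ ℝ^c (k = 0,...,T), satisfy the KKT conditions of the potential optimal control problem: for every agent block i and every k, ∂P(x_k,u_k,k)/∂x^i_k + ξ_k^⊤ ∂f(x_k,u_k,k)/∂x^i_k + δ_k^⊤ ∂g(x_k,u_k,k)/∂x^i_k − ξ_{k−1}^i = 0, ∂P(x_k,u_k,k)/∂u^i_k + ξ_k^⊤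 ∂f(x_k,u_k,k)/∂u^i_k + δ_k^⊤ ∂g(x_k,u_k,k)/∂u^i_k = 0, x_{k+1} = f(x_k,u_k,k), g(x_k,u_k,k) ≤ 0, ∂R(x_T)/∂x^i_T + δ_T^⊤ ∂g(x_T,T)/∂x^i_T = 0, g(x_T,T) ≤ 0, δ_k ≤ 0, and δ_k^⊤ g(x_k,u_k,k) = 0. Then, setting λ^i_k := ξ_k and μ^i_k := δ_k for every agent i, the same trajectory (x_k, u_k)_k together with (λ^i_k, μ^i_k) satisfies the KKT conditions of each agent i's constrained optimal control problem: ∂L^i(x_k,u_k,k)/∂x^i_k + (λ^i_k)^⊤ ∂f(x_k,u_k,k)/∂x^i_k + (μ^i_k)^⊤ ∂g(x_k,u_k,k)/∂x^i_k − (λ^i_{k−1})^i = 0, ∂L^i(x_k,u_k,k)/∂u^i_k + (λ^i_k)^⊤ ∂f(x_k,u_k,k)/∂u^i_k + (μ^i_k)^⊤ ∂g(x_k,u_k,k)/∂u^i_k = 0, ∂S^i(x_T)/∂x^i_T + (μ^i_T)^⊤ ∂g(x_T,T)/∂x^i_T = 0, μ^i_k ≤ 0, and (μ^i_k)^⊤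 g(x_k,u_k,k) = 0 for all k. -/
noncomputable def sdot {N : ℕ} {n : Fin N → ℕ} (a b : ∀ j, Fin (n j) → ℝ) : ℝ :=
  ∑ j, ∑ l, a j l * b j l

theorem potential_KKT_implies_agent_KKT_general
    {N T c : ℕ} (n m : Fin N → ℕ)
    -- joint dynamics and constraints
    (f : (∀ j, Fin (n j) → ℝ) → (∀ j, Fin (m j) → ℝ) → ℕ → (∀ j, Fin (n j) → ℝ))
    (g : (∀ j, Fin (n j) → ℝ) → (∀ j, Fin (m j) → ℝ) → ℕ → Fin c → ℝ)
    (gT : (∀ j, Fin (n j) → ℝ) → Fin c → ℝ)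
    -- costs and candidate potentials
    (L : ∀ _ : Fin N, (∀ j, Fin (n j) → ℝ) → (∀ j, Fin (m j) → ℝ) → ℕ → ℝ)
    (S : ∀ _ : Fin N, (∀ j, Fin (n j) → ℝ) → ℝ)
    (P : (∀ j, Fin (n j) → ℝ) → (∀ j, Fin (m j) → ℝ) → ℕ → ℝ)
    (R : (∀ j, Fin (n j) → ℝ) → ℝ)
    -- gradient-equality conditions
    (hgradx : ∀ (i : Fin N) (x : ∀ j, Fin (n j) → ℝ) (u : ∀ j, Fin (m j) → ℝ) (k : ℕ),
      k < T →
      fderiv ℝ (fun xi : Fin (n i) → ℝ => L i (Function.update x i xi) u k) (x i)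
        = fderiv ℝ (fun xi : Fin (n i) → ℝ => P (Function.update x i xi) u k) (x i))
    (hgradu : ∀ (i : Fin N) (x : ∀ j, Fin (n j) → ℝ) (u : ∀ j, Fin (m j) → ℝ) (k : ℕ),
      k < T →
      fderiv ℝ (fun ui : Fin (m i) → ℝ => L i x (Function.update u i ui) k) (u i)
        = fderiv ℝ (fun ui : Fin (m i) → ℝ => P x (Function.update u i ui) k) (u i))
    (hgradT : ∀ (i : Fin N) (x : ∀ j, Fin (n j) → ℝ),
      fderiv ℝ (fun xi : Fin (n i) → ℝ => S i (Function.update x i xi)) (x i)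
        = fderiv ℝ (fun xi : Fin (n i) → ℝ => R (Function.update x i xi)) (x i))
    -- a trajectory and multipliers
    (x : ℕ → ∀ j, Fin (n j) → ℝ) (u : ℕ → ∀ j, Fin (m j) → ℝ)
    (ξ : ℕ → ∀ j, Fin (n j) → ℝ) (δ : ℕ → Fin c → ℝ)
    -- KKT conditions of the potential optimal control problem:
    -- stationarity in each agent's state block
    (hstatx : ∀ (i : Fin N) (k : ℕ), k < T → ∀ v : Fin (n i) → ℝ,
      fderiv ℝ (fun xi : Fin (n i) → ℝ => P (Function.update (x k) i xi) (u k) k) (x k i) v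
        + sdot (ξ k)
            (fderiv ℝ (fun xi : Fin (n i) → ℝ =>
              f (Function.update (x k) i xi) (u k) k) (x k i) v)
        + (∑ l, δ k l *
            fderiv ℝ (fun xi : Fin (n i) → ℝ =>
              g (Function.update (x k) i xi) (u k) k) (x k i) v l)
        - (if k = 0 then 0 else ∑ l, ξ (k - 1) i l * v l) = 0)
    -- stationarity in each agent's action block
    (hstatu : ∀ (i : Fin N) (k : ℕ), k < T → ∀ v : Fin (m i) → ℝ,
      fderiv ℝ (fun ui : Fin (m i) → ℝ => P (x k) (Function.update (u k) i ui) k) (u k i) v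
        + sdot (ξ k)
            (fderiv ℝ (fun ui : Fin (m i) → ℝ =>
              f (x k) (Function.update (u k) i ui) k) (u k i) v)
        + (∑ l, δ k l *
            fderiv ℝ (fun ui : Fin (m i) → ℝ =>
              g (x k) (Function.update (u k) i ui) k) (u k i) v l) = 0)
    -- terminal stationarity
    (hstatT : ∀ (i : Fin N) (v : Fin (n i) → ℝ),
      fderiv ℝ (fun xi : Fin (n i) → ℝ => R (Function.update (x T) i xi)) (x T i) v
        + (∑ l, δ T l *
            fderiv ℝ (fun xi : Fin (n i) → ℝ =>
              gT (Function.update (x T) i xi)) (x T i) v l) = 0)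
    -- multiplier sign and complementary slackness
    (hsign : ∀ k : ℕ, k ≤ T → ∀ l : Fin c, δ k l ≤ 0)
    (hcomp : ∀ k : ℕ, k < T → ∑ l, δ k l * g (x k) (u k) k l = 0)
    (hcompT : ∑ l, δ T l * gT (x T) l = 0) :
    -- Conclusion: with λ^i_k := ξ_k and μ^i_k := δ_k, the same trajectory and
    -- multipliers satisfy the KKT conditions of every agent's problem.
    ∀ i : Fin N,
      (∀ k : ℕ, k < T → ∀ v : Fin (n i) → ℝ,
        fderiv ℝ (fun xi : Fin (n i) → ℝ =>
            L i (Function.update (x k) i xi) (u k) k) (x k i) v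
          + sdot (ξ k)
              (fderiv ℝ (fun xi : Fin (n i) → ℝ =>
                f (Function.update (x k) i xi) (u k) k) (x k i) v)
          + (∑ l, δ k l *
              fderiv ℝ (fun xi : Fin (n i) → ℝ =>
                g (Function.update (x k) i xi) (u k) k) (x k i) v l)
          - (if k = 0 then 0 else ∑ l, ξ (k - 1) i l * v l) = 0) ∧
      (∀ k : ℕ, k < T → ∀ v : Fin (m i) → ℝ,
        fderiv ℝ (fun ui : Fin (m i) → ℝ =>
            L i (x k) (Function.update (u k) i ui) k) (u k i) v
          + sdot (ξ k)
              (fderiv ℝ (fun ui : Fin (m i) → ℝ =>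
                f (x k) (Function.update (u k) i ui) k) (u k i) v)
          + (∑ l, δ k l *
              fderiv ℝ (fun ui : Fin (m i) → ℝ =>
                g (x k) (Function.update (u k) i ui) k) (u k i) v l) = 0) ∧
      (∀ v : Fin (n i) → ℝ,
        fderiv ℝ (fun xi : Fin (n i) → ℝ => S i (Function.update (x T) i xi)) (x T i) v
          + (∑ l, δ T l *
              fderiv ℝ (fun xi : Fin (n i) → ℝ =>
                gT (Function.update (x T) i xi)) (x T i) v l) = 0) ∧
      (∀ k : ℕ, k ≤ T → ∀ l : Fin c, δ k l ≤ 0) ∧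
      (∀ k : ℕ, k < T → ∑ l, δ k l * g (x k) (u k) k l = 0) ∧
      (∑ l, δ T l * gT (x T) l = 0) := by
  intro i
  refine ⟨fun k hk => ?_, fun k hk => ?_, ?_, hsign, hcomp, hcompT⟩
  · rw [hgradx i (x k) (u k) k hk]
    exact hstatx i k hk
  · rw [hgradu i (x k) (u k) k hk]
    exact hstatu i k hk
  · rw [hgradT i (x T)]
    exact hstatT i

theorem potential_KKT_implies_agent_KKT
    {N T c : ℕ} (n m : Fin N → ℕ)
    -- joint dynamics and constraints
    (f : (∀ j, Fin (n j) → ℝ) → (∀ j, Fin (m j) → ℝ) → ℕ → (∀ j, Fin (n j) → ℝ))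
    (g : (∀ j, Fin (n j) → ℝ) → (∀ j, Fin (m j) → ℝ) → ℕ → Fin c → ℝ)
    (gT : (∀ j, Fin (n j) → ℝ) → Fin c → ℝ)
    -- costs and candidate potentials
    (L : ∀ _ : Fin N, (∀ j, Fin (n j) → ℝ) → (∀ j, Fin (m j) → ℝ) → ℕ → ℝ)
    (S : ∀ _ : Fin N, (∀ j, Fin (n j) → ℝ) → ℝ)
    (P : (∀ j, Fin (n j) → ℝ) → (∀ j, Fin (m j) → ℝ) → ℕ → ℝ)
    (R : (∀ j, Fin (n j) → ℝ) → ℝ)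
    -- continuous differentiability of all cost, dynamics, constraint functions
    (hLsmooth : ∀ (i : Fin N) (k : ℕ), k < T →
      ContDiff ℝ 1 (fun p : (∀ j, Fin (n j) → ℝ) × (∀ j, Fin (m j) → ℝ) => L i p.1 p.2 k))
    (hSsmooth : ∀ i : Fin N, ContDiff ℝ 1 (S i))
    (hPsmooth : ∀ k : ℕ, k < T →
      ContDiff ℝ 1 (fun p : (∀ j, Fin (n j) → ℝ) × (∀ j, Fin (m j) → ℝ) => P p.1 p.2 k))
    (hRsmooth : ContDiff ℝ 1 R)
    (hfsmooth : ∀ k : ℕ, k < T →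
      ContDiff ℝ 1 (fun p : (∀ j, Fin (n j) → ℝ) × (∀ j, Fin (m j) → ℝ) => f p.1 p.2 k))
    (hgsmooth : ∀ k : ℕ, k < T →
      ContDiff ℝ 1 (fun p : (∀ j, Fin (n j) → ℝ) × (∀ j, Fin (m j) → ℝ) => g p.1 p.2 k))
    (hgTsmooth : ContDiff ℝ 1 gT)
    -- gradient-equality conditions
    (hgradx : ∀ (i : Fin N) (x : ∀ j, Fin (n j) → ℝ) (u : ∀ j, Fin (m j) → ℝ) (k : ℕ),
      k < T →
      fderiv ℝ (fun xi : Fin (n i) → ℝ => L i (Function.update x i xi) u k) (x i)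
        = fderiv ℝ (fun xi : Fin (n i) → ℝ => P (Function.update x i xi) u k) (x i))
    (hgradu : ∀ (i : Fin N) (x : ∀ j, Fin (n j) → ℝ) (u : ∀ j, Fin (m j) → ℝ) (k : ℕ),
      k < T →
      fderiv ℝ (fun ui : Fin (m i) → ℝ => L i x (Function.update u i ui) k) (u i)
        = fderiv ℝ (fun ui : Fin (m i) → ℝ => P x (Function.update u i ui) k) (u i))
    (hgradT : ∀ (i : Fin N) (x : ∀ j, Fin (n j) → ℝ),
      fderiv ℝ (fun xi : Fin (n i) → ℝ => S i (Function.update x i xi)) (x i)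
        = fderiv ℝ (fun xi : Fin (n i) → ℝ => R (Function.update x i xi)) (x i))
    -- a trajectory and multipliers
    (x : ℕ → ∀ j, Fin (n j) → ℝ) (u : ℕ → ∀ j, Fin (m j) → ℝ)
    (ξ : ℕ → ∀ j, Fin (n j) → ℝ) (δ : ℕ → Fin c → ℝ)
    -- KKT conditions of the potential optimal control problem:
    -- stationarity in each agent's state block
    (hstatx : ∀ (i : Fin N) (k : ℕ), k < T → ∀ v : Fin (n i) → ℝ,
      fderiv ℝ (fun xi : Fin (n i) → ℝ => P (Function.update (x k) i xi) (u k) k) (x k i) v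
        + sdot (ξ k)
            (fderiv ℝ (fun xi : Fin (n i) → ℝ =>
              f (Function.update (x k) i xi) (u k) k) (x k i) v)
        + (∑ l, δ k l *
            fderiv ℝ (fun xi : Fin (n i) → ℝ =>
              g (Function.update (x k) i xi) (u k) k) (x k i) v l)
        - (if k = 0 then 0 else ∑ l, ξ (k - 1) i l * v l) = 0)
    -- stationarity in each agent's action block
    (hstatu : ∀ (i : Fin N) (k : ℕ), k < T → ∀ v : Fin (m i) → ℝ,
      fderiv ℝ (fun ui : Fin (m i) → ℝ => P (x k) (Function.update (u k) i ui) k) (u k i) v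
        + sdot (ξ k)
            (fderiv ℝ (fun ui : Fin (m i) → ℝ =>
              f (x k) (Function.update (u k) i ui) k) (u k i) v)
        + (∑ l, δ k l *
            fderiv ℝ (fun ui : Fin (m i) → ℝ =>
              g (x k) (Function.update (u k) i ui) k) (u k i) v l) = 0)
    -- primal feasibility
    (hdyn : ∀ k : ℕ, k < T → x (k + 1) = f (x k) (u k) k)
    (hgfeas : ∀ k : ℕ, k < T → ∀ l : Fin c, g (x k) (u k) k l ≤ 0)
    (hgTfeas : ∀ l : Fin c, gT (x T) l ≤ 0)
    -- terminal stationarity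
    (hstatT : ∀ (i : Fin N) (v : Fin (n i) → ℝ),
      fderiv ℝ (fun xi : Fin (n i) → ℝ => R (Function.update (x T) i xi)) (x T i) v
        + (∑ l, δ T l *
            fderiv ℝ (fun xi : Fin (n i) → ℝ =>
              gT (Function.update (x T) i xi)) (x T i) v l) = 0)
    -- multiplier sign and complementary slackness
    (hsign : ∀ k : ℕ, k ≤ T → ∀ l : Fin c, δ k l ≤ 0)
    (hcomp : ∀ k : ℕ, k < T → ∑ l, δ k l * g (x k) (u k) k l = 0)
    (hcompT : ∑ l, δ T l * gT (x T) l = 0) :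
    -- Conclusion: with λ^i_k := ξ_k and μ^i_k := δ_k, the same trajectory and
    -- multipliers satisfy the KKT conditions of every agent's problem.
    ∀ i : Fin N,
      (∀ k : ℕ, k < T → ∀ v : Fin (n i) → ℝ,
        fderiv ℝ (fun xi : Fin (n i) → ℝ =>
            L i (Function.update (x k) i xi) (u k) k) (x k i) v
          + sdot (ξ k)
              (fderiv ℝ (fun xi : Fin (n i) → ℝ =>
                f (Function.update (x k) i xi) (u k) k) (x k i) v)
          + (∑ l, δ k l *
              fderiv ℝ (fun xi : Fin (n i) → ℝ =>
                g (Function.update (x k) i xi) (u k) k) (x k i) v l)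
          - (if k = 0 then 0 else ∑ l, ξ (k - 1) i l * v l) = 0) ∧
      (∀ k : ℕ, k < T → ∀ v : Fin (m i) → ℝ,
        fderiv ℝ (fun ui : Fin (m i) → ℝ =>
            L i (x k) (Function.update (u k) i ui) k) (u k i) v
          + sdot (ξ k)
              (fderiv ℝ (fun ui : Fin (m i) → ℝ =>
                f (x k) (Function.update (u k) i ui) k) (u k i) v)
          + (∑ l, δ k l *
              fderiv ℝ (fun ui : Fin (m i) → ℝ =>
                g (x k) (Function.update (u k) i ui) k) (u k i) v l) = 0) ∧
      (∀ v : Fin (n i) → ℝ,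
        fderiv ℝ (fun xi : Fin (n i) → ℝ => S i (Function.update (x T) i xi)) (x T i) v
          + (∑ l, δ T l *
              fderiv ℝ (fun xi : Fin (n i) → ℝ =>
                gT (Function.update (x T) i xi)) (x T i) v l) = 0) ∧
      (∀ k : ℕ, k ≤ T → ∀ l : Fin c, δ k l ≤ 0) ∧
      (∀ k : ℕ, k < T → ∑ l, δ k l * g (x k) (u k) k l = 0) ∧
      (∑ l, δ T l * gT (x T) l = 0) :=
  potential_KKT_implies_agent_KKT_general n m f g gT L S P R hgradx hgradu hgradT x u ξ δ hstatx
    hstatu hstatT hsign hcomp hcompT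
end
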